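/- The convex hull of any finite set of points in ℝⁿ is an H-polytope: it is bounded and can be written as a finite intersection of closed half-spaces. In particular, every V-polytope is an H-polytope. -/

import Mathlib

/-!
The convex hull of a finite set `S` is the image of the standard simplex in `S → ℝ` under the
linear map `w ↦ ∑ s, w s • s`, and the simplex is cut out by finitely many inequalities. Images
of polyhedra under linear maps between finite-dimensional spaces are polyhedra: such an image is
the projection of the graph, and a projection along one coordinate is handled by
Fourier–Motzkin elimination. Boundedness is compactness of the hull of a finite set.
-/

open RealInnerProductSpace

/-- An `H`-polyhedron: a finite intersection of closed half-spaces
`{x | ⟪aᵢ, x⟫ ≤ bᵢ}`. -/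
def IsHPolyhedron {n : ℕ} (A : Set (EuclideanSpace ℝ (Fin n))) : Prop :=
  ∃ (p : ℕ) (a : Fin p → EuclideanSpace ℝ (Fin n)) (b : Fin p → ℝ),
    A = ⋂ i, {x : EuclideanSpace ℝ (Fin n) | ⟪a i, x⟫ ≤ b i}

open Module

theorem exists_forall_le_and_forall_le {α ι κ : Type*} [ConditionallyCompleteLattice α]
    [Nonempty α] [Finite ι] [Finite κ] {l : ι → α} {u : κ → α} (h : ∀ i j, l i ≤ u j) :
    ∃ t, (∀ i, l i ≤ t) ∧ ∀ j, t ≤ u j := by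
  cases isEmpty_or_nonempty ι
  · obtain ⟨t, ht⟩ := (Set.finite_range u).bddBelow
    exact ⟨t, isEmptyElim, fun j => ht ⟨j, rfl⟩⟩
  · exact ⟨⨆ i, l i, fun i => le_ciSup (Set.finite_range l).bddAbove i,
      fun j => ciSup_le fun i => h i j⟩

/-- Fourier–Motzkin: to eliminate `t`, keep the inequalities not involving it and add, for every
pair in which it occurs with opposite signs, the positive combination in which it cancels. -/
theorem exists_forall_add_mul_le_iff {ι : Type*} [Finite ι] (g c b : ι → ℝ) :
    (∃ t, ∀ i, g i + c i * t ≤ b i) ↔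
      (∀ i, c i = 0 → g i ≤ b i) ∧
        ∀ i, 0 < c i → ∀ j, c j < 0 → c i * g j - c j * g i ≤ c i * b j - c j * b i := by
  constructor
  · rintro ⟨t, ht⟩
    refine ⟨fun i hi => by simpa [hi] using ht i, fun i hi j hj => ?_⟩
    nlinarith [mul_le_mul_of_nonneg_left (ht i) (neg_nonneg.2 hj.le),
      mul_le_mul_of_nonneg_left (ht j) hi.le]
  · rintro ⟨hzero, hpair⟩
    obtain ⟨t, hlow, hupp⟩ := exists_forall_le_and_forall_le
      (l := fun j : {j // c j < 0} => (g j - b j) / -c j)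
      (u := fun i : {i // 0 < c i} => (b i - g i) / c i) fun ⟨j, hj⟩ ⟨i, hi⟩ => by
        rw [div_le_div_iff₀ (neg_pos.2 hj) hi]
        nlinarith [hpair i hi j hj]
    refine ⟨t, fun i => ?_⟩
    rcases lt_trichotomy (c i) 0 with hi | hi | hi
    · have := (div_le_iff₀ (neg_pos.2 hi)).1 (hlow ⟨i, hi⟩)
      linarith
    · simpa [hi] using hzero i hi
    · have := (le_div_iff₀ hi).1 (hupp ⟨i, hi⟩)
      linarith

section Polyhedral

variable {E F : Type*} [AddCommGroup E] [Module ℝ E] [AddCommGroup F] [Module ℝ F]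

def IsPolyhedral (A : Set E) : Prop :=
  ∃ (p : ℕ) (f : Fin p → Dual ℝ E) (b : Fin p → ℝ), A = ⋂ i, {x | f i x ≤ b i}

theorem isPolyhedral_iInter {ι : Type*} [Finite ι] (f : ι → Dual ℝ E) (b : ι → ℝ) :
    IsPolyhedral (⋂ i, {x | f i x ≤ b i}) := by
  obtain ⟨p, ⟨e⟩⟩ := Finite.exists_equiv_fin ι
  refine ⟨p, f ∘ e.symm, b ∘ e.symm, ?_⟩
  ext x
  simp [e.forall_congr_left]

namespace IsPolyhedral

theorem inter {A B : Set E} (hA : IsPolyhedral A) (hB : IsPolyhedral B) :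
    IsPolyhedral (A ∩ B) := by
  obtain ⟨p, f, b, rfl⟩ := hA
  obtain ⟨q, f', b', rfl⟩ := hB
  convert isPolyhedral_iInter (Sum.elim f f') (Sum.elim b b') using 1
  ext x
  simp [Sum.forall]

theorem preimage {A : Set F} (hA : IsPolyhedral A) (g : E →ₗ[ℝ] F) :
    IsPolyhedral (g ⁻¹' A) := by
  obtain ⟨p, f, b, rfl⟩ := hA
  exact ⟨p, fun i => f i ∘ₗ g, b, by ext; simp⟩

theorem image_linearEquiv {A : Set E} (hA : IsPolyhedral A) (e : E ≃ₗ[ℝ] F) :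
    IsPolyhedral (e '' A) :=
  e.image_eq_preimage_symm A ▸ hA.preimage e.symm.toLinearMap

theorem image_fst_real {A : Set (E × ℝ)} (hA : IsPolyhedral A) :
    IsPolyhedral (Prod.fst '' A) := by
  obtain ⟨p, f, b, rfl⟩ := hA
  set g : Fin p → Dual ℝ E := fun i => f i ∘ₗ LinearMap.inl ℝ E ℝ
  set c : Fin p → ℝ := fun i => f i (0, 1)
  have hf : ∀ i x t, f i (x, t) = g i x + c i * t := fun i x t => by
    have hxt : (x, t) = LinearMap.inl ℝ E ℝ x + t • (0, 1) := by ext <;> simp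
    rw [hxt, map_add, map_smul, smul_eq_mul, mul_comm]
    rfl
  convert isPolyhedral_iInter
    (Sum.elim (fun i : {i // c i = 0} => g i) fun q : {i // 0 < c i} × {j // c j < 0} =>
      c q.1 • g q.2 - c q.2 • g q.1)
    (Sum.elim (fun i => b i) fun q => c q.1 * b q.2 - c q.2 * b q.1) using 1
  ext x
  have := exists_forall_add_mul_le_iff (fun i => g i x) c b
  simp only [Set.mem_image, Set.mem_iInter, Set.mem_ofPred_eq, Prod.exists, exists_and_right,
    exists_eq_right, hf] at this ⊢
  simp [this, Sum.forall]

theorem image_fst_pi {m : ℕ} {A : Set (E × (Fin m → ℝ))} (hA : IsPolyhedral A) :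
    IsPolyhedral (Prod.fst '' A) := by
  induction m generalizing E with
  | zero => exact hA.image_linearEquiv LinearEquiv.prodUnique
  | succ m ih =>
    let split : (Fin (m + 1) → ℝ) ≃ₗ[ℝ] ℝ × (Fin m → ℝ) :=
      (Fin.consLinearEquiv ℝ fun _ : Fin (m + 1) => ℝ).symm
    let e := ((LinearEquiv.refl ℝ E).prodCongr split).trans
      (LinearEquiv.prodAssoc ℝ E ℝ (Fin m → ℝ)).symm
    have := (ih (hA.image_linearEquiv e)).image_fst_real
    rwa [Set.image_image, Set.image_image] at this

theorem image_fst [FiniteDimensional ℝ F] {A : Set (E × F)} (hA : IsPolyhedral A) :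
    IsPolyhedral (Prod.fst '' A) := by
  have := (hA.image_linearEquiv
    ((LinearEquiv.refl ℝ E).prodCongr (finBasis ℝ F).equivFun)).image_fst_pi
  rwa [Set.image_image] at this

end IsPolyhedral

theorem isPolyhedral_zero [FiniteDimensional ℝ E] : IsPolyhedral ({0} : Set E) := by
  let v := finBasis ℝ E
  convert isPolyhedral_iInter (Sum.elim v.coord fun i => -v.coord i) 0 using 1
  ext x
  simp only [Set.mem_singleton_iff, Set.mem_iInter, Set.mem_ofPred_eq, Sum.forall,
    Sum.elim_inl, Sum.elim_inr, LinearMap.neg_apply, Pi.zero_apply, neg_nonpos,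
    ← forall_and, ← le_antisymm_iff, v.forall_coord_eq_zero_iff]

theorem IsPolyhedral.image [FiniteDimensional ℝ E] [FiniteDimensional ℝ F] {A : Set E}
    (hA : IsPolyhedral A) (g : E →ₗ[ℝ] F) : IsPolyhedral (g '' A) := by
  have hgraph : IsPolyhedral {p : F × E | p.2 ∈ A ∧ p.1 - g p.2 = 0} :=
    (hA.preimage (LinearMap.snd ℝ F E)).inter
      (isPolyhedral_zero.preimage (LinearMap.fst ℝ F E - g ∘ₗ LinearMap.snd ℝ F E))
  convert hgraph.image_fst using 1
  ext y
  simp [sub_eq_zero, eq_comm (a := y)]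

theorem isPolyhedral_stdSimplex (ι : Type*) [Fintype ι] : IsPolyhedral (stdSimplex ℝ ι) := by
  let σ : Dual ℝ (ι → ℝ) := ∑ i, LinearMap.proj i
  let f : ι ⊕ Fin 2 → Dual ℝ (ι → ℝ) := Sum.elim (fun i => -LinearMap.proj i) ![σ, -σ]
  let b : ι ⊕ Fin 2 → ℝ := Sum.elim 0 ![1, -1]
  have hσ : stdSimplex ℝ ι = ⋂ k, {w | f k w ≤ b k} := by
    ext w
    simp [f, b, σ, stdSimplex, Sum.forall, Fin.forall_fin_two, le_antisymm_iff]
  exact hσ ▸ isPolyhedral_iInter f b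

theorem isPolyhedral_convexHull [FiniteDimensional ℝ E] {S : Set E} (hS : S.Finite) :
    IsPolyhedral (convexHull ℝ S) := by
  let := hS.fintype
  rw [hS.convexHull_eq_image]
  apply IsPolyhedral.image
  exact isPolyhedral_stdSimplex S

end Polyhedral

theorem IsPolyhedral.isHPolyhedron {n : ℕ} {A : Set (EuclideanSpace ℝ (Fin n))}
    (hA : IsPolyhedral A) : IsHPolyhedron A := by
  obtain ⟨p, f, b, rfl⟩ := hA
  refine ⟨p, fun i => (InnerProductSpace.toDual ℝ _).symm (LinearMap.toContinuousLinearMap (f i)),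
    b, ?_⟩
  simp [InnerProductSpace.toDual_symm_apply]

/-- The convex hull of a finite set of points in `ℝⁿ` is a bounded finite
intersection of closed half-spaces, i.e. an `H`-polytope; every `V`-polytope
is an `H`-polytope. -/
theorem vPolytope_is_hPolytope (n : ℕ) (S : Set (EuclideanSpace ℝ (Fin n)))
    (hS : S.Finite) :
    Bornology.IsBounded (convexHull ℝ S) ∧ IsHPolyhedron (convexHull ℝ S) :=
  ⟨(hS.isCompact_convexHull ℝ).isBounded, (isPolyhedral_convexHull hS).isHPolyhedron⟩
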